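/- arXiv:2208.14891 — 3 statements merged into one kernel-verified Lean document; each statement's English description precedes it below -/
import Mathlib

section
/- Consider the conceptual prox method: z_0 ∈ Z arbitrary, and for each t ≥ 1, z_t ∈ Z satisfies z_t = Prox_{z_{t−1}}(η F(z_t)). Then for every T ∈ ℕ and every ẑ ∈ Z, the cumulative linear regret satisfies ∑_{t=1}^T ⟨F(z_t), z_t − ẑ⟩ ≤ (1/η)(D(ẑ‖z_0) − D(ẑ‖z_T)) − (1/η)∑_{t=1}^T D(z_t‖z_{t−1}) ≤ (1/η) D(ẑ‖z_0). In particular, the regret is bounded by a constant independent of T. -/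
/-!
At each step `z_t` minimises `u ↦ ⟪η F(z_t), u⟫ + D(u‖z_{t-1})` over the convex set `Z`, so the
first-order optimality condition gives `⟪η F(z_t) + ∇φ(z_t) - ∇φ(z_{t-1}), ẑ - z_t⟫ ≥ 0`. By the
three-point identity of the Bregman divergence this is the per-step inequality
`η ⟪F(z_t), z_t - ẑ⟫ ≤ D(ẑ‖z_{t-1}) - D(ẑ‖z_t) - D(z_t‖z_{t-1})`, which telescopes over
`t = 1, …, T`; nonnegativity of `D` gives the final bound.
-/

open scoped RealInnerProductSpace

open Finset

theorem IsMinOn.hasFDerivWithinAt_nonneg_of_convex {E : Type*} [NormedAddCommGroup E]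
    [NormedSpace ℝ E] {f : E → ℝ} {f' : E →L[ℝ] ℝ} {s : Set E} {a w : E} (hs : Convex ℝ s)
    (hmin : IsMinOn f s a) (hf : HasFDerivWithinAt f f' s a) (ha : a ∈ s) (hw : w ∈ s) :
    0 ≤ f' (w - a) :=
  hmin.localize.hasFDerivWithinAt_nonneg hf
    (sub_mem_posTangentConeAt_of_segment_subset (hs.segment_subset ha hw))

theorem Finset.sum_Icc_one_sub_pred {M : Type*} [AddCommGroup M] (f : ℕ → M) (n : ℕ) :
    ∑ t ∈ Icc 1 n, (f (t - 1) - f t) = f 0 - f n := by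
  induction n with
  | zero => simp
  | succ n ih => rw [sum_Icc_succ_top (by omega), ih, Nat.add_sub_cancel]; abel

section Bregman

variable {E : Type*} [NormedAddCommGroup E] [InnerProductSpace ℝ E]
  {φ : E → ℝ} {gradφ : E → E} {D : E → E → ℝ}

theorem bregman_three_point (hD : ∀ x x', D x x' = φ x - φ x' - ⟪gradφ x', x - x'⟫)
    (w x y : E) : D w x - D w y - D y x = ⟪gradφ y - gradφ x, w - y⟫ := by
  simp only [hD, inner_sub_left, inner_sub_right]
  ring

variable [CompleteSpace E]

theorem hasFDerivAt_inner_add_bregman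
    (hD : ∀ x x', D x x' = φ x - φ x' - ⟪gradφ x', x - x'⟫)
    (a x : E) {y : E} (hφ : HasGradientAt φ (gradφ y) y) :
    HasFDerivAt (fun u => ⟪a, u⟫ + D u x) (innerSL ℝ (a + gradφ y - gradφ x)) y := by
  have hfun : (fun u => ⟪a, u⟫ + D u x) =
      fun u => φ u + ⟪a - gradφ x, u⟫ + (⟪gradφ x, x⟫ - φ x) := by
    funext u
    simp only [hD, inner_sub_left, inner_sub_right]
    ring
  have hderiv : innerSL ℝ (a + gradφ y - gradφ x) =
      InnerProductSpace.toDual ℝ E (gradφ y) + innerSL ℝ (a - gradφ x) := by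
    ext v
    simp only [innerSL_apply_apply, add_apply,
      InnerProductSpace.toDual_apply_apply, inner_add_left, inner_sub_left]
    ring
  rw [hfun, hderiv]
  exact (hφ.hasFDerivAt.add (innerSL ℝ (a - gradφ x)).hasFDerivAt).add_const _

theorem inner_sub_le_bregman_of_isMinOn {s : Set E} (hs : Convex ℝ s)
    (hD : ∀ x x', D x x' = φ x - φ x' - ⟪gradφ x', x - x'⟫)
    {a x y w : E} (hφ : HasGradientAt φ (gradφ y) y)
    (hmin : IsMinOn (fun u => ⟪a, u⟫ + D u x) s y) (hy : y ∈ s) (hw : w ∈ s) :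
    ⟪a, y - w⟫ ≤ D w x - D w y - D y x := by
  have hopt := hmin.hasFDerivWithinAt_nonneg_of_convex hs
    (hasFDerivAt_inner_add_bregman hD a x hφ).hasFDerivWithinAt hy hw
  rw [innerSL_apply_apply] at hopt
  rw [bregman_three_point hD]
  simp only [inner_add_left, inner_sub_left, inner_sub_right] at hopt ⊢
  linarith

end Bregman

theorem stmt_5_general {d : ℕ} (Z : Set (EuclideanSpace ℝ (Fin d)))
    (hZconv : Convex ℝ Z)
    (φ : EuclideanSpace ℝ (Fin d) → ℝ)
    (gradφ : EuclideanSpace ℝ (Fin d) → EuclideanSpace ℝ (Fin d))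
    (hgrad : ∀ x ∈ Z, HasGradientAt φ (gradφ x) x)
    (D : EuclideanSpace ℝ (Fin d) → EuclideanSpace ℝ (Fin d) → ℝ)
    (hD : ∀ x x', D x x' = φ x - φ x' - ⟪gradφ x', x - x'⟫)
    (hDnonneg : ∀ x ∈ Z, ∀ x' ∈ Z, 0 ≤ D x x')
    (F : EuclideanSpace ℝ (Fin d) → EuclideanSpace ℝ (Fin d))
    (η : ℝ) (hη : 0 < η)
    (z : ℕ → EuclideanSpace ℝ (Fin d)) (hz0 : z 0 ∈ Z)
    (hmem : ∀ t : ℕ, 1 ≤ t → z t ∈ Z)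
    -- fixed-point equation `z_t = Prox_{z_{t−1}}(η F(z_t))` for all `t ≥ 1`:
    (hfp : ∀ t : ℕ, 1 ≤ t → ∀ w ∈ Z,
      ⟪η • F (z t), z t⟫ + D (z t) (z (t - 1)) ≤ ⟪η • F (z t), w⟫ + D w (z (t - 1))) :
    ∀ T : ℕ, ∀ zhat ∈ Z,
      (∑ t ∈ Finset.Icc 1 T, ⟪F (z t), z t - zhat⟫)
          ≤ (1/η) * (D zhat (z 0) - D zhat (z T))
            - (1/η) * ∑ t ∈ Finset.Icc 1 T, D (z t) (z (t - 1)) ∧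
      (1/η) * (D zhat (z 0) - D zhat (z T))
          - (1/η) * ∑ t ∈ Finset.Icc 1 T, D (z t) (z (t - 1))
        ≤ (1/η) * D zhat (z 0) := by
  intro T zhat hzhat
  have hz : ∀ t, z t ∈ Z := fun t => t.eq_zero_or_pos.elim (· ▸ hz0) (hmem t)
  have hstep : ∀ t ∈ Icc 1 T, η * ⟪F (z t), z t - zhat⟫
      ≤ (D zhat (z (t - 1)) - D zhat (z t)) - D (z t) (z (t - 1)) := fun t ht => by
    rw [← real_inner_smul_left]
    exact inner_sub_le_bregman_of_isMinOn hZconv hD (hgrad _ (hz t))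
      (isMinOn_iff.2 (hfp t (mem_Icc.1 ht).1)) (hz t) hzhat
  have hsum : η * ∑ t ∈ Icc 1 T, ⟪F (z t), z t - zhat⟫
      ≤ (D zhat (z 0) - D zhat (z T)) - ∑ t ∈ Icc 1 T, D (z t) (z (t - 1)) := by
    rw [mul_sum, ← sum_Icc_one_sub_pred (fun t => D zhat (z t)), ← sum_sub_distrib]
    exact sum_le_sum hstep
  have hDT : 0 ≤ D zhat (z T) := hDnonneg _ hzhat _ (hz T)
  have hDsum : 0 ≤ ∑ t ∈ Icc 1 T, D (z t) (z (t - 1)) :=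
    sum_nonneg fun t _ => hDnonneg _ (hz t) _ (hz (t - 1))
  rw [← mul_sub]
  constructor
  · rw [one_div, ← div_eq_inv_mul, le_div_iff₀ hη]
    linarith
  · exact mul_le_mul_of_nonneg_left (by linarith) (by positivity)

/-- Constant regret of the (exact) conceptual prox method: if for all `t ≥ 1` the
iterate `z_t` satisfies `z_t = Prox_{z_{t−1}}(η F(z_t))`, then for every `T` and
every comparator `ẑ ∈ Z`,
`∑_{t=1}^T ⟪F(z_t), z_t − ẑ⟫ ≤ (1/η)(D(ẑ‖z_0) − D(ẑ‖z_T)) − (1/η)∑_t D(z_t‖z_{t−1})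
  ≤ (1/η) D(ẑ‖z_0)`. -/
theorem stmt_5 {d : ℕ} (Z : Set (EuclideanSpace ℝ (Fin d)))
    (hZne : Z.Nonempty) (hZconv : Convex ℝ Z) (hZcomp : IsCompact Z)
    (N : Seminorm ℝ (EuclideanSpace ℝ (Fin d)))
    (hNdef : ∀ v, N v = 0 → v = 0)
    (φ : EuclideanSpace ℝ (Fin d) → ℝ)
    (gradφ : EuclideanSpace ℝ (Fin d) → EuclideanSpace ℝ (Fin d))
    (hgrad : ∀ x ∈ Z, HasGradientAt φ (gradφ x) x)
    (hsc : ∀ x ∈ Z, ∀ y ∈ Z,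
      φ x + ⟪gradφ x, y - x⟫ + (1/2) * (N (y - x))^2 ≤ φ y)
    (D : EuclideanSpace ℝ (Fin d) → EuclideanSpace ℝ (Fin d) → ℝ)
    (hD : ∀ x x', D x x' = φ x - φ x' - ⟪gradφ x', x - x'⟫)
    (hDnonneg : ∀ x ∈ Z, ∀ x' ∈ Z, 0 ≤ D x x')
    (F : EuclideanSpace ℝ (Fin d) → EuclideanSpace ℝ (Fin d))
    (η : ℝ) (hη : 0 < η)
    (z : ℕ → EuclideanSpace ℝ (Fin d)) (hz0 : z 0 ∈ Z)
    (hmem : ∀ t : ℕ, 1 ≤ t → z t ∈ Z)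
    -- fixed-point equation `z_t = Prox_{z_{t−1}}(η F(z_t))` for all `t ≥ 1`:
    (hfp : ∀ t : ℕ, 1 ≤ t → ∀ w ∈ Z,
      ⟪η • F (z t), z t⟫ + D (z t) (z (t - 1)) ≤ ⟪η • F (z t), w⟫ + D w (z (t - 1))) :
    ∀ T : ℕ, ∀ zhat ∈ Z,
      (∑ t ∈ Finset.Icc 1 T, ⟪F (z t), z t - zhat⟫)
          ≤ (1/η) * (D zhat (z 0) - D zhat (z T))
            - (1/η) * ∑ t ∈ Finset.Icc 1 T, D (z t) (z (t - 1)) ∧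
      (1/η) * (D zhat (z 0) - D zhat (z T))
          - (1/η) * ∑ t ∈ Finset.Icc 1 T, D (z t) (z (t - 1))
        ≤ (1/η) * D zhat (z 0) :=
  stmt_5_general Z hZconv φ gradφ hgrad D hD hDnonneg F η hη z hz0 hmem hfp
end

section
/- Suppose ‖F(z)‖_* ≤ B for all z ∈ Z. Let z_{t−1} ∈ Z, η > 0, and let w_t ∈ Z be an ε-approximate fixed point, i.e. ‖w_t − Prox_{z_{t−1}}(η F(w_t))‖ ≤ ε. Set z_t := Prox_{z_{t−1}}(η F(w_t)). Then for all ẑ ∈ Z: η⟨F(w_t), ẑ − w_t⟩ ≥ D(ẑ‖z_t) − D(ẑ‖z_{t−1}) + D(z_t‖z_{t−1}) − ηBε. -/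
/-!
The prox point `z_t` minimises `⟪η F(w_t), ·⟫ + D(·‖z_{t−1})` over the convex set `Z`, so
first-order optimality gives `⟪η F(w_t) + ∇φ(z_t) − ∇φ(z_{t−1}), ẑ − z_t⟫ ≥ 0`, and the
three-point identity of Bregman divergences turns the gradient term into
`D(ẑ‖z_t) − D(ẑ‖z_{t−1}) + D(z_t‖z_{t−1})`. Replacing `z_t` by `w_t` in `⟪F(w_t), ẑ − z_t⟫`
costs at most `‖F(w_t)‖_* ‖w_t − z_t‖ ≤ Bε`.
-/
open scoped RealInnerProductSpace

open InnerProductSpace Metric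

section DualNorm

variable {E : Type*} [NormedAddCommGroup E] [InnerProductSpace ℝ E]

noncomputable def Seminorm.dualNorm (N : Seminorm ℝ E) (g : E) : ℝ :=
  sSup ((fun v => ⟪g, v⟫) '' {v | N v ≤ 1})

theorem Seminorm.exists_pos_mul_norm_le [FiniteDimensional ℝ E] (N : Seminorm ℝ E)
    (hN : ∀ v, N v = 0 → v = 0) : ∃ c > 0, ∀ v, c * ‖v‖ ≤ N v := by
  cases subsingleton_or_nontrivial E with
  | inl _ => exact ⟨1, one_pos, fun v => by simp [Subsingleton.elim v 0]⟩
  | inr _ =>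
    have hNcont : Continuous N := continuousOn_univ.mp (N.convexOn.continuousOn isOpen_univ)
    obtain ⟨u, hu, hmin⟩ := (isCompact_sphere (0 : E) 1).exists_isMinOn
      (NormedSpace.sphere_nonempty.mpr zero_le_one) hNcont.continuousOn
    have hu1 : ‖u‖ = 1 := mem_sphere_zero_iff_norm.mp hu
    refine ⟨N u, (apply_nonneg N u).lt_of_ne fun h => by simp [hN u h.symm] at hu1, fun v => ?_⟩
    rcases eq_or_ne v 0 with rfl | hv
    · simp
    have hv' : ‖v‖ ≠ 0 := norm_ne_zero_iff.mpr hv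
    have hmem : ‖v‖⁻¹ • v ∈ sphere (0 : E) 1 := by simp [norm_smul, hv']
    have := mul_le_mul_of_nonneg_left (hmin hmem) (norm_nonneg v)
    rw [map_smul_eq_mul, norm_inv, norm_norm, mul_inv_cancel_left₀ hv'] at this
    linarith

theorem Seminorm.bddAbove_inner_image_unitBall [FiniteDimensional ℝ E] (N : Seminorm ℝ E)
    (hN : ∀ v, N v = 0 → v = 0) (g : E) : BddAbove ((fun v => ⟪g, v⟫) '' {v | N v ≤ 1}) := by
  obtain ⟨c, hc, hle⟩ := N.exists_pos_mul_norm_le hN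
  refine ⟨‖g‖ / c, ?_⟩
  rintro _ ⟨v, hv, rfl⟩
  have hv' : ‖v‖ ≤ 1 / c := by rw [le_div_iff₀ hc, mul_comm]; exact (hle v).trans hv
  calc ⟪g, v⟫ ≤ ‖g‖ * ‖v‖ := real_inner_le_norm g v
    _ ≤ ‖g‖ * (1 / c) := by gcongr
    _ = ‖g‖ / c := by ring

theorem Seminorm.dualNorm_nonneg [FiniteDimensional ℝ E] (N : Seminorm ℝ E)
    (hN : ∀ v, N v = 0 → v = 0) (g : E) : 0 ≤ N.dualNorm g :=
  le_csSup (N.bddAbove_inner_image_unitBall hN g) ⟨0, by simp, by simp⟩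

theorem Seminorm.inner_le_dualNorm_mul [FiniteDimensional ℝ E] (N : Seminorm ℝ E)
    (hN : ∀ v, N v = 0 → v = 0) (g v : E) : ⟪g, v⟫ ≤ N.dualNorm g * N v := by
  rcases (apply_nonneg N v).eq_or_lt with h | h
  · simp [hN v h.symm]
  have hunit : N ((N v)⁻¹ • v) ≤ 1 := by
    rw [map_smul_eq_mul, norm_inv, Real.norm_of_nonneg h.le, inv_mul_cancel₀ h.ne']
  have : ⟪g, (N v)⁻¹ • v⟫ ≤ N.dualNorm g :=
    le_csSup (N.bddAbove_inner_image_unitBall hN g) ⟨_, hunit, rfl⟩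
  rwa [real_inner_smul_right, inv_mul_le_iff₀ h, mul_comm] at this

end DualNorm

section Bregman

variable {E : Type*} [NormedAddCommGroup E] [InnerProductSpace ℝ E]
  {φ : E → ℝ} {gradφ : E → E} {D : E → E → ℝ}

theorem bregman_add_sub_bregman (hD : ∀ x x', D x x' = φ x - φ x' - ⟪gradφ x', x - x'⟫)
    (a b c : E) : D a b - D a c + D b c = ⟪gradφ c - gradφ b, a - b⟫ := by
  simp only [hD, inner_sub_left, inner_sub_right]
  ring

variable [CompleteSpace E]

theorem IsMinOn.inner_gradient_nonneg {f : E → ℝ} {s : Set E} {a y g : E}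
    (hs : Convex ℝ s) (hmin : IsMinOn f s a) (hf : HasGradientAt f g a) (ha : a ∈ s)
    (hy : y ∈ s) : 0 ≤ ⟪g, y - a⟫ := by
  simpa using hmin.localize.hasFDerivWithinAt_nonneg
    (hasGradientAt_iff_hasFDerivAt.mp hf).hasFDerivWithinAt
    (sub_mem_posTangentConeAt_of_segment_subset (hs.segment_subset ha hy))

theorem hasGradientAt_inner_sub_const (c a b : E) : HasGradientAt (fun w => ⟪c, w - b⟫) c a := by
  have := (toDual ℝ E c).hasFDerivAt.comp a ((hasFDerivAt_id a).sub_const b)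
  rwa [ContinuousLinearMap.comp_id] at this

theorem hasGradientAt_bregman (hD : ∀ x x', D x x' = φ x - φ x' - ⟪gradφ x', x - x'⟫)
    {a : E} (hφ : HasGradientAt φ (gradφ a) a) (b : E) :
    HasGradientAt (fun w => D w b) (gradφ a - gradφ b) a := by
  simp only [hD]
  rw [hasGradientAt_iff_hasFDerivAt, map_sub]
  exact ((hasGradientAt_iff_hasFDerivAt.mp hφ).sub_const (φ b)).sub
    (hasGradientAt_iff_hasFDerivAt.mp (hasGradientAt_inner_sub_const _ a b))

theorem bregman_prox_three_point (hD : ∀ x x', D x x' = φ x - φ x' - ⟪gradφ x', x - x'⟫)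
    {Z : Set E} (hZ : Convex ℝ Z) {u zprev z : E} (hz : z ∈ Z)
    (hφ : HasGradientAt φ (gradφ z) z)
    (hprox : ∀ w ∈ Z, ⟪u, z⟫ + D z zprev ≤ ⟪u, w⟫ + D w zprev) {zhat : E} (hzhat : zhat ∈ Z) :
    D zhat z - D zhat zprev + D z zprev ≤ ⟪u, zhat - z⟫ := by
  have hgrad : HasGradientAt (fun w => ⟪u, w⟫ + D w zprev) (u + (gradφ z - gradφ zprev)) z := by
    rw [hasGradientAt_iff_hasFDerivAt, map_add]
    exact (toDual ℝ E u).hasFDerivAt.add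
      (hasGradientAt_iff_hasFDerivAt.mp (hasGradientAt_bregman hD hφ zprev))
  have hopt := IsMinOn.inner_gradient_nonneg hZ (isMinOn_iff.mpr hprox) hgrad hz hzhat
  rw [bregman_add_sub_bregman hD, ← neg_sub, inner_neg_left]
  rw [inner_add_left] at hopt
  linarith

end Bregman

theorem stmt_6_general {d : ℕ} (Z : Set (EuclideanSpace ℝ (Fin d)))
    (hZconv : Convex ℝ Z)
    (N : Seminorm ℝ (EuclideanSpace ℝ (Fin d)))
    (hNdef : ∀ v, N v = 0 → v = 0)
    (Nstar : EuclideanSpace ℝ (Fin d) → ℝ)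
    (hNstar : ∀ g, Nstar g = sSup ((fun v => ⟪g, v⟫) '' {v | N v ≤ 1}))
    (φ : EuclideanSpace ℝ (Fin d) → ℝ)
    (gradφ : EuclideanSpace ℝ (Fin d) → EuclideanSpace ℝ (Fin d))
    (hgrad : ∀ x ∈ Z, HasGradientAt φ (gradφ x) x)
    (D : EuclideanSpace ℝ (Fin d) → EuclideanSpace ℝ (Fin d) → ℝ)
    (hD : ∀ x x', D x x' = φ x - φ x' - ⟪gradφ x', x - x'⟫)
    (F : EuclideanSpace ℝ (Fin d) → EuclideanSpace ℝ (Fin d))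
    (B : ℝ) (hB : ∀ w ∈ Z, Nstar (F w) ≤ B)
    (η : ℝ) (hη : 0 < η) (ε : ℝ)
    (zprev : EuclideanSpace ℝ (Fin d))
    (wt : EuclideanSpace ℝ (Fin d)) (hwt : wt ∈ Z)
    (zt : EuclideanSpace ℝ (Fin d)) (hztZ : zt ∈ Z)
    -- `z_t = Prox_{z_{t−1}}(η F(w_t))`:
    (hzt : ∀ w ∈ Z, ⟪η • F wt, zt⟫ + D zt zprev ≤ ⟪η • F wt, w⟫ + D w zprev)
    -- `w_t` is an `ε`-approximate fixed point:
    (happrox : N (wt - zt) ≤ ε) :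
    ∀ zhat ∈ Z,
      D zhat zt - D zhat zprev + D zt zprev - η * B * ε
        ≤ η * ⟪F wt, zhat - wt⟫ := by
  intro zhat hzhat
  have hprox := bregman_prox_three_point hD hZconv hztZ (hgrad zt hztZ) hzt hzhat
  have hFB : N.dualNorm (F wt) ≤ B := (hNstar (F wt)).symm.trans_le (hB wt hwt)
  have hdual : ⟪F wt, wt - zt⟫ ≤ B * ε :=
    calc ⟪F wt, wt - zt⟫ ≤ N.dualNorm (F wt) * N (wt - zt) :=
          N.inner_le_dualNorm_mul hNdef _ _
      _ ≤ B * ε := mul_le_mul hFB happrox (apply_nonneg N _)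
          ((N.dualNorm_nonneg hNdef _).trans hFB)
  have hsplit : ⟪η • F wt, zhat - zt⟫ = η * ⟪F wt, zhat - wt⟫ + η * ⟪F wt, wt - zt⟫ := by
    rw [real_inner_smul_left, ← mul_add, ← inner_add_right, sub_add_sub_cancel]
  linarith [mul_le_mul_of_nonneg_left hdual hη.le]

/-- Per-step inequality of the conceptual prox method with an `ε`-approximate
fixed point: if `‖w_t − Prox_{z_{t−1}}(η F(w_t))‖ ≤ ε` and
`z_t := Prox_{z_{t−1}}(η F(w_t))`, then for all `ẑ ∈ Z`,
`η⟪F(w_t), ẑ − w_t⟫ ≥ D(ẑ‖z_t) − D(ẑ‖z_{t−1}) + D(z_t‖z_{t−1}) − ηBε`. -/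
theorem stmt_6 {d : ℕ} (Z : Set (EuclideanSpace ℝ (Fin d)))
    (hZne : Z.Nonempty) (hZconv : Convex ℝ Z) (hZcomp : IsCompact Z)
    (N : Seminorm ℝ (EuclideanSpace ℝ (Fin d)))
    (hNdef : ∀ v, N v = 0 → v = 0)
    (Nstar : EuclideanSpace ℝ (Fin d) → ℝ)
    (hNstar : ∀ g, Nstar g = sSup ((fun v => ⟪g, v⟫) '' {v | N v ≤ 1}))
    (φ : EuclideanSpace ℝ (Fin d) → ℝ)
    (gradφ : EuclideanSpace ℝ (Fin d) → EuclideanSpace ℝ (Fin d))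
    (hgrad : ∀ x ∈ Z, HasGradientAt φ (gradφ x) x)
    (hsc : ∀ x ∈ Z, ∀ y ∈ Z,
      φ x + ⟪gradφ x, y - x⟫ + (1/2) * (N (y - x))^2 ≤ φ y)
    (D : EuclideanSpace ℝ (Fin d) → EuclideanSpace ℝ (Fin d) → ℝ)
    (hD : ∀ x x', D x x' = φ x - φ x' - ⟪gradφ x', x - x'⟫)
    (F : EuclideanSpace ℝ (Fin d) → EuclideanSpace ℝ (Fin d))
    (B : ℝ) (hB : ∀ w ∈ Z, Nstar (F w) ≤ B)
    (η : ℝ) (hη : 0 < η) (ε : ℝ) (hε : 0 ≤ ε)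
    (zprev : EuclideanSpace ℝ (Fin d)) (hzprev : zprev ∈ Z)
    (wt : EuclideanSpace ℝ (Fin d)) (hwt : wt ∈ Z)
    (zt : EuclideanSpace ℝ (Fin d)) (hztZ : zt ∈ Z)
    -- `z_t = Prox_{z_{t−1}}(η F(w_t))`:
    (hzt : ∀ w ∈ Z, ⟪η • F wt, zt⟫ + D zt zprev ≤ ⟪η • F wt, w⟫ + D w zprev)
    -- `w_t` is an `ε`-approximate fixed point:
    (happrox : N (wt - zt) ≤ ε) :
    ∀ zhat ∈ Z,
      D zhat zt - D zhat zprev + D zt zprev - η * B * ε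
        ≤ η * ⟪F wt, zhat - wt⟫ :=
  stmt_6_general Z hZconv N hNdef Nstar hNstar φ gradφ hgrad D hD F B hB η hη ε zprev wt hwt zt hztZ
    hzt happrox
end

section
/- Consider the approximate conceptual prox method: z_0 ∈ Z arbitrary, and for each t ≥ 1, w_t ∈ Z satisfies ‖w_t − Prox_{z_{t−1}}(η F(w_t))‖ ≤ ε_t, with z_t := Prox_{z_{t−1}}(η F(w_t)). Then for every T ∈ ℕ and ẑ ∈ Z: ∑_{t=1}^T ⟨F(w_t), w_t − ẑ⟩ ≤ (1/η) D(ẑ‖z_0) + B ∑_{t=1}^T ε_t. -/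
open scoped RealInnerProductSpace

lemma aux_coord {d : ℕ} (v : EuclideanSpace ℝ (Fin d)) (i : Fin d) : |v i| ≤ ‖v‖ := by
  rw [EuclideanSpace.norm_eq]
  rw [show |v i| = Real.sqrt (|v i|^2) by rw [Real.sqrt_sq_eq_abs, abs_abs]]
  apply Real.sqrt_le_sqrt
  have : |v i|^2 = ‖v i‖^2 := by simp [Real.norm_eq_abs]
  rw [this]
  exact Finset.single_le_sum (f := fun j => ‖v j‖^2) (fun j _ => by positivity) (Finset.mem_univ i)

lemma aux_upper {d : ℕ} (N : Seminorm ℝ (EuclideanSpace ℝ (Fin d))) :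
    ∃ C : ℝ, ∀ v, N v ≤ C * ‖v‖ := by
  refine ⟨∑ i : Fin d, N (EuclideanSpace.single i 1), fun v => ?_⟩
  have hv : v = ∑ i : Fin d, (v i) • EuclideanSpace.single i (1:ℝ) := by
    ext j
    rw [show (∑ i : Fin d, (v i) • EuclideanSpace.single i (1:ℝ)) j
        = ∑ i : Fin d, ((v i) • EuclideanSpace.single i (1:ℝ)) j by rw [WithLp.ofLp_sum, Finset.sum_apply]]
    simp [EuclideanSpace.single_apply]
  calc N v ≤ ∑ i : Fin d, N ((v i) • EuclideanSpace.single i (1:ℝ)) := by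
        conv_lhs => rw [hv]
        exact Finset.le_sum_of_subadditive N (map_zero N).le (fun a b => map_add_le_add N a b) _ _
    _ ≤ ∑ i : Fin d, N (EuclideanSpace.single i (1:ℝ)) * ‖v‖ := by
        apply Finset.sum_le_sum
        intro i _
        rw [map_smul_eq_mul]
        rw [mul_comm (N _)]
        exact mul_le_mul_of_nonneg_right (by simpa using aux_coord v i) (apply_nonneg N _)
    _ = _ := by rw [← Finset.sum_mul]

lemma aux_cont {d : ℕ} (N : Seminorm ℝ (EuclideanSpace ℝ (Fin d))) : Continuous N := by
  obtain ⟨C, hC⟩ := aux_upper N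
  have hlip : ∀ x y : EuclideanSpace ℝ (Fin d), |N x - N y| ≤ C * ‖x - y‖ := by
    intro x y
    rw [abs_sub_le_iff]
    constructor
    · have h1 : N x ≤ N y + N (x - y) := by
        simpa using map_add_le_add N y (x - y)
      linarith [hC (x - y)]
    · have h1 : N y ≤ N x + N (y - x) := by
        simpa using map_add_le_add N x (y - x)
      have := hC (y - x)
      rw [norm_sub_rev] at this
      linarith
  rw [Metric.continuous_iff]
  intro x ε hε
  by_cases hC0 : C ≤ 0
  · exact ⟨1, one_pos, fun y _ => by
      rw [Real.dist_eq]
      have := hlip y x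
      have h2 : C * ‖y - x‖ ≤ 0 := mul_nonpos_of_nonpos_of_nonneg hC0 (norm_nonneg _)
      calc |N y - N x| ≤ C * ‖y - x‖ := this
        _ ≤ 0 := h2
        _ < ε := hε⟩
  · push_neg at hC0
    refine ⟨ε / C, div_pos hε hC0, fun y hy => ?_⟩
    rw [Real.dist_eq]
    calc |N y - N x| ≤ C * ‖y - x‖ := hlip y x
      _ = C * dist y x := by rw [dist_eq_norm]
      _ < C * (ε / C) := by exact mul_lt_mul_of_pos_left hy hC0
      _ = ε := by field_simp

lemma aux_lower {d : ℕ} (N : Seminorm ℝ (EuclideanSpace ℝ (Fin d)))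
    (hNdef : ∀ v, N v = 0 → v = 0) :
    ∃ c : ℝ, 0 < c ∧ ∀ v, c * ‖v‖ ≤ N v := by
  by_cases hd : d = 0
  · subst hd
    refine ⟨1, one_pos, fun v => ?_⟩
    have : v = 0 := Subsingleton.elim v 0
    simp [this]
  · haveI : Nonempty (Fin d) := ⟨⟨0, Nat.pos_of_ne_zero hd⟩⟩
    have hsph : (Metric.sphere (0 : EuclideanSpace ℝ (Fin d)) 1).Nonempty :=
      NormedSpace.sphere_nonempty.mpr zero_le_one
    obtain ⟨x0, hx0mem, hx0min⟩ := (isCompact_sphere (0 : EuclideanSpace ℝ (Fin d)) 1).exists_isMinOn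
      hsph ((aux_cont N).continuousOn)
    have hx0norm : ‖x0‖ = 1 := by simpa using hx0mem
    have hx0ne : x0 ≠ 0 := by
      intro h
      rw [h] at hx0norm; simp at hx0norm
    have hc : 0 < N x0 := by
      rcases lt_or_eq_of_le (apply_nonneg N x0) with h | h
      · exact h
      · exact absurd (hNdef x0 h.symm) hx0ne
    refine ⟨N x0, hc, fun v => ?_⟩
    by_cases hv : v = 0
    · simp [hv]
    · have hnv : 0 < ‖v‖ := norm_pos_iff.mpr hv
      have hmem : ‖v‖⁻¹ • v ∈ Metric.sphere (0 : EuclideanSpace ℝ (Fin d)) 1 := by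
        simp [norm_smul, abs_of_pos (inv_pos.mpr hnv), inv_mul_cancel₀ hnv.ne']
      have h2 : N x0 ≤ N (‖v‖⁻¹ • v) := hx0min hmem
      have heq : N (‖v‖⁻¹ • v) = ‖v‖⁻¹ * N v := by
        rw [map_smul_eq_mul]; simp [abs_of_pos (inv_pos.mpr hnv)]
      rw [heq] at h2
      calc N x0 * ‖v‖ ≤ (‖v‖⁻¹ * N v) * ‖v‖ := mul_le_mul_of_nonneg_right h2 hnv.le
        _ = N v := by field_simp

lemma aux_pair {d : ℕ} (N : Seminorm ℝ (EuclideanSpace ℝ (Fin d)))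
    (hNdef : ∀ v, N v = 0 → v = 0)
    (Nstar : EuclideanSpace ℝ (Fin d) → ℝ)
    (hNstar : ∀ g, Nstar g = sSup ((fun v => ⟪g, v⟫) '' {v | N v ≤ 1})) :
    (∀ g, 0 ≤ Nstar g) ∧ (∀ g v, ⟪g, v⟫ ≤ Nstar g * N v) := by
  obtain ⟨c, hc, hlow⟩ := aux_lower N hNdef
  have hbdd : ∀ g : EuclideanSpace ℝ (Fin d),
      BddAbove ((fun v => ⟪g, v⟫) '' {v | N v ≤ 1}) := by
    intro g
    refine ⟨‖g‖ * c⁻¹, fun y hy => ?_⟩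
    obtain ⟨v, hv, rfl⟩ := hy
    have h1 : ‖v‖ ≤ c⁻¹ := by
      have h0 : c * ‖v‖ ≤ 1 := le_trans (hlow v) hv
      rw [inv_eq_one_div, le_div_iff₀ hc]
      linarith
    calc ⟪g, v⟫ ≤ ‖g‖ * ‖v‖ := real_inner_le_norm g v
      _ ≤ ‖g‖ * c⁻¹ := mul_le_mul_of_nonneg_left h1 (norm_nonneg g)
  have hmem0 : ∀ g : EuclideanSpace ℝ (Fin d),
      (0:ℝ) ∈ ((fun v => ⟪g, v⟫) '' {v | N v ≤ 1}) :=
    fun g => ⟨0, by simp, by simp⟩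
  have hpos : ∀ g, 0 ≤ Nstar g := by
    intro g
    rw [hNstar g]
    exact le_csSup (hbdd g) (hmem0 g)
  refine ⟨hpos, fun g v => ?_⟩
  by_cases hv : N v = 0
  · have : v = 0 := hNdef v hv
    simp [this, hv]
  · have hNv : 0 < N v := lt_of_le_of_ne (apply_nonneg N v) (Ne.symm hv)
    have hmem : (N v)⁻¹ • v ∈ {v' | N v' ≤ 1} := by
      have : N ((N v)⁻¹ • v) = (N v)⁻¹ * N v := by
        rw [map_smul_eq_mul]; simp [abs_of_pos (inv_pos.mpr hNv)]
      simp only [Set.mem_setOf_eq, this, inv_mul_cancel₀ hNv.ne', le_refl]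
    have h2 : ⟪g, (N v)⁻¹ • v⟫ ≤ Nstar g := by
      rw [hNstar g]
      exact le_csSup (hbdd g) ⟨_, hmem, rfl⟩
    rw [real_inner_smul_right] at h2
    have h3 := mul_le_mul_of_nonneg_right h2 hNv.le
    calc ⟪g, v⟫ = ((N v)⁻¹ * ⟪g, v⟫) * N v := by field_simp
      _ ≤ Nstar g * N v := h3
lemma aux_threepoint {d : ℕ} (Z : Set (EuclideanSpace ℝ (Fin d)))
    (hZconv : Convex ℝ Z)
    (φ : EuclideanSpace ℝ (Fin d) → ℝ)
    (gradφ : EuclideanSpace ℝ (Fin d) → EuclideanSpace ℝ (Fin d))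
    (hgrad : ∀ x ∈ Z, HasGradientAt φ (gradφ x) x)
    (D : EuclideanSpace ℝ (Fin d) → EuclideanSpace ℝ (Fin d) → ℝ)
    (hD : ∀ x x', D x x' = φ x - φ x' - ⟪gradφ x', x - x'⟫)
    (G : EuclideanSpace ℝ (Fin d)) (p q : EuclideanSpace ℝ (Fin d))
    (hpZ : p ∈ Z)
    (hopt : ∀ v ∈ Z, ⟪G, p⟫ + D p q ≤ ⟪G, v⟫ + D v q)
    (zhat : EuclideanSpace ℝ (Fin d)) (hzhat : zhat ∈ Z) :
    ⟪G, p - zhat⟫ ≤ D zhat q - D zhat p - D p q := by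
  set u := zhat - p with hu
  set L : ℝ := ⟪G, u⟫ - ⟪gradφ q, u⟫ with hL
  set h : ℝ → ℝ := fun s => φ (p + s • u) + s * L with hh
  have hmemZ : ∀ s ∈ Set.Icc (0:ℝ) 1, p + s • u ∈ Z := by
    intro s hs
    have := hZconv hpZ hzhat (by linarith [hs.2] : (0:ℝ) ≤ 1 - s) hs.1 (by ring)
    convert this using 1
    simp only [hu]
    module
  have hmin : ∀ s ∈ Set.Icc (0:ℝ) 1, h 0 ≤ h s := by
    intro s hs
    have h2 := hopt (p + s • u) (hmemZ s hs)
    simp only [hD] at h2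
    have e1 : ⟪G, p + s • u⟫ = ⟪G, p⟫ + s * ⟪G, u⟫ := by
      rw [inner_add_right, real_inner_smul_right]
    have e2 : ⟪gradφ q, p + s • u - q⟫ = ⟪gradφ q, p - q⟫ + s * ⟪gradφ q, u⟫ := by
      rw [show p + s • u - q = (p - q) + s • u by abel, inner_add_right, real_inner_smul_right]
    rw [e1, e2] at h2
    simp only [hh, zero_smul, add_zero, zero_mul, hL]
    nlinarith [h2]
  have hder : HasDerivAt h (⟪gradφ p, u⟫ + L) 0 := by
    have hγ : HasDerivAt (fun s : ℝ => p + s • u) u 0 := by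
      have : HasDerivAt (fun s : ℝ => s • u) ((1:ℝ) • u) 0 := (hasDerivAt_id (0:ℝ)).smul_const u
      simpa using this.const_add p
    have hF : HasFDerivAt φ (InnerProductSpace.toDual ℝ _ (gradφ p)) p := (hgrad p hpZ).hasFDerivAt
    have hF' : HasFDerivAt φ (InnerProductSpace.toDual ℝ _ (gradφ p)) (p + (0:ℝ) • u) := by
      simpa using hF
    have hφ : HasDerivAt (fun s : ℝ => φ (p + s • u)) ⟪gradφ p, u⟫ 0 := by
      have := hF'.comp_hasDerivAt (0:ℝ) hγ
      exact this
    have hlin : HasDerivAt (fun s : ℝ => s * L) L 0 := by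
      simpa using (hasDerivAt_id (0:ℝ)).mul_const L
    exact hφ.add hlin
  have hpos : 0 ≤ ⟪gradφ p, u⟫ + L := by
    have hs := hasDerivAt_iff_tendsto_slope.mp hder
    have hs' : Filter.Tendsto (slope h 0) (nhdsWithin 0 (Set.Ioi 0)) (nhds (⟪gradφ p, u⟫ + L)) :=
      hs.mono_left (nhdsWithin_mono 0 (fun x hx => ne_of_gt hx))
    refine ge_of_tendsto hs' ?_
    filter_upwards [Ioc_mem_nhdsGT_of_mem (Set.mem_Ico.mpr ⟨le_refl (0:ℝ), one_pos⟩)] with s hs2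
    have hmin' := hmin s ⟨le_of_lt hs2.1, hs2.2⟩
    have hsl : slope h 0 s = (h s - h 0) / s := by
      rw [slope_def_field]; rw [sub_zero]
    rw [hsl]
    exact div_nonneg (by linarith) hs2.1.le
  -- conclude
  have hident : ⟪gradφ p - gradφ q, u⟫ = D zhat q - D zhat p - D p q := by
    simp only [hD, hu, inner_sub_left]
    have : ⟪gradφ q, zhat - q⟫ = ⟪gradφ q, zhat - p⟫ + ⟪gradφ q, p - q⟫ := by
      rw [← inner_add_right]; congr 1; abel
    rw [this]
    ring
  have hx : ⟪G, p - zhat⟫ = -⟪G, u⟫ := by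
    rw [hu, ← inner_neg_right]; congr 1; abel
  rw [hx, ← hident]
  simp only [hL, inner_sub_left] at hpos ⊢
  linarith

/-- Regret bound of the approximate conceptual prox method: with
`‖w_t − Prox_{z_{t−1}}(η F(w_t))‖ ≤ ε_t` and `z_t := Prox_{z_{t−1}}(η F(w_t))`,
for every `T` and `ẑ ∈ Z`,
`∑_{t=1}^T ⟪F(w_t), w_t − ẑ⟫ ≤ (1/η) D(ẑ‖z_0) + B ∑_{t=1}^T ε_t`. -/
theorem stmt_7 {d : ℕ} (Z : Set (EuclideanSpace ℝ (Fin d)))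
    (hZne : Z.Nonempty) (hZconv : Convex ℝ Z) (hZcomp : IsCompact Z)
    (N : Seminorm ℝ (EuclideanSpace ℝ (Fin d)))
    (hNdef : ∀ v, N v = 0 → v = 0)
    (Nstar : EuclideanSpace ℝ (Fin d) → ℝ)
    (hNstar : ∀ g, Nstar g = sSup ((fun v => ⟪g, v⟫) '' {v | N v ≤ 1}))
    (φ : EuclideanSpace ℝ (Fin d) → ℝ)
    (gradφ : EuclideanSpace ℝ (Fin d) → EuclideanSpace ℝ (Fin d))
    (hgrad : ∀ x ∈ Z, HasGradientAt φ (gradφ x) x)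
    (hsc : ∀ x ∈ Z, ∀ y ∈ Z,
      φ x + ⟪gradφ x, y - x⟫ + (1/2) * (N (y - x))^2 ≤ φ y)
    (D : EuclideanSpace ℝ (Fin d) → EuclideanSpace ℝ (Fin d) → ℝ)
    (hD : ∀ x x', D x x' = φ x - φ x' - ⟪gradφ x', x - x'⟫)
    (hDnonneg : ∀ x ∈ Z, ∀ x' ∈ Z, 0 ≤ D x x')
    (F : EuclideanSpace ℝ (Fin d) → EuclideanSpace ℝ (Fin d))
    (B : ℝ) (hB : ∀ w ∈ Z, Nstar (F w) ≤ B)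
    (η : ℝ) (hη : 0 < η) (ε : ℕ → ℝ) (hε : ∀ t, 0 ≤ ε t)
    (z w : ℕ → EuclideanSpace ℝ (Fin d)) (hz0 : z 0 ∈ Z)
    (hwmem : ∀ t : ℕ, 1 ≤ t → w t ∈ Z)
    (hzmem : ∀ t : ℕ, 1 ≤ t → z t ∈ Z)
    -- `z_t = Prox_{z_{t−1}}(η F(w_t))`:
    (hzt : ∀ t : ℕ, 1 ≤ t → ∀ v ∈ Z,
      ⟪η • F (w t), z t⟫ + D (z t) (z (t - 1))
        ≤ ⟪η • F (w t), v⟫ + D v (z (t - 1)))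
    -- `w_t` is an `ε_t`-approximate fixed point:
    (happrox : ∀ t : ℕ, 1 ≤ t → N (w t - z t) ≤ ε t) :
    ∀ T : ℕ, ∀ zhat ∈ Z,
      ∑ t ∈ Finset.Icc 1 T, ⟪F (w t), w t - zhat⟫
        ≤ (1/η) * D zhat (z 0) + B * ∑ t ∈ Finset.Icc 1 T, ε t := by
  obtain ⟨hNstar0, hpair⟩ := aux_pair N hNdef Nstar hNstar
  -- per-step bound
  have hstep : ∀ t : ℕ, 1 ≤ t → ∀ zhat ∈ Z,
      ⟪F (w t), w t - zhat⟫ ≤ (1/η) * (D zhat (z (t-1)) - D zhat (z t)) + B * ε t := by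
    intro t ht zhat hzhat
    have hpZ : z t ∈ Z := hzmem t ht
    have hqZ : z (t-1) ∈ Z := by
      rcases Nat.eq_zero_or_pos (t-1) with h | h
      · rw [h]; exact hz0
      · exact hzmem _ h
    have h3pt := aux_threepoint Z hZconv φ gradφ hgrad D hD (η • F (w t)) (z t) (z (t-1))
      hpZ (hzt t ht) zhat hzhat
    -- ⟪η • F (w t), z t - zhat⟫ ≤ D zhat (z (t-1)) - D zhat (z t) - D (z t) (z (t-1))
    have hDpq : 0 ≤ D (z t) (z (t-1)) := hDnonneg _ hpZ _ hqZ
    have h4 : η * ⟪F (w t), z t - zhat⟫ ≤ D zhat (z (t-1)) - D zhat (z t) := by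
      have := real_inner_smul_left (F (w t)) (z t - zhat) η
      linarith [h3pt, this.symm ▸ h3pt]
    have h5 : ⟪F (w t), z t - zhat⟫ ≤ (1/η) * (D zhat (z (t-1)) - D zhat (z t)) := by
      rw [one_div, inv_mul_eq_div, le_div_iff₀ hη]
      linarith [h4]
    have hsplit : ⟪F (w t), w t - zhat⟫ = ⟪F (w t), w t - z t⟫ + ⟪F (w t), z t - zhat⟫ := by
      rw [← inner_add_right]; congr 1; abel
    have hBnn : 0 ≤ B := le_trans (hNstar0 _) (hB _ (hwmem t ht))
    have hdual : ⟪F (w t), w t - z t⟫ ≤ B * ε t :=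
      le_trans (hpair _ _)
        (mul_le_mul (hB _ (hwmem t ht)) (happrox t ht) (apply_nonneg N _) hBnn)
    rw [hsplit]; linarith
  -- telescoping by induction
  have main : ∀ T : ℕ, ∀ zhat ∈ Z,
      ∑ t ∈ Finset.Icc 1 T, ⟪F (w t), w t - zhat⟫
        ≤ (1/η) * (D zhat (z 0) - D zhat (z T)) + B * ∑ t ∈ Finset.Icc 1 T, ε t := by
    intro T
    induction T with
    | zero => intro zhat hzhat; simp
    | succ T ih =>
      intro zhat hzhat
      rw [Finset.sum_Icc_succ_top (Nat.one_le_iff_ne_zero.mpr (Nat.succ_ne_zero T)),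
        Finset.sum_Icc_succ_top (Nat.one_le_iff_ne_zero.mpr (Nat.succ_ne_zero T))]
      have h1 := ih zhat hzhat
      have h2 := hstep (T+1) (Nat.le_add_left 1 T) zhat hzhat
      rw [Nat.add_sub_cancel] at h2
      linarith
  intro T zhat hzhat
  have h1 := main T zhat hzhat
  have h2 : 0 ≤ D zhat (z T) := by
    rcases Nat.eq_zero_or_pos T with h | h
    · rw [h]; exact hDnonneg _ hzhat _ hz0
    · exact hDnonneg _ hzhat _ (hzmem T h)
  have h3 : 0 ≤ (1/η) := by positivity
  nlinarith
end
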